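/- Suppose Y_1, …, Y_h ∈ R satisfy f^{(2)}(Y_i) = 0 for all i, and set X_i := f(Y_i). Then for every matrix M ∈ M_h(F_q[t]), g( Σ_{i=1}^h μ(X_1, …, X_{i−1}, (M⋆Y)_i, X_{i+1}, …, X_h) ) equals the determinant of the h×h matrix whose i-th row is ((M⋆X)_i, X_i^q, X_i^{q^2}, …, X_i^{q^{h−1}}). -/

import Mathlib

open Finset

noncomputable section

/-- The Moore determinant `μ(X₁, …, X_h) = det (Xᵢ^{q^{j-1}})`. -/
def moore (q : ℕ) {h : ℕ} {R : Type*} [CommRing R] (X : Fin h → R) : R :=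
  Matrix.det (Matrix.of fun i j : Fin h => X i ^ q ^ (j : ℕ))

/-- `f(X) = πX + u₁X^q + ⋯ + u_{h−1}X^{q^{h−1}} + X^{q^h}`. -/
def fmap (q h : ℕ) {R : Type*} [CommRing R] (π : R) (u : ℕ → R) (X : R) : R :=
  π * X + (∑ k ∈ Finset.Ico 1 h, u k * X ^ q ^ k) + X ^ q ^ h

/-- `g(T) = πT + (−1)^{h−1}T^q`. -/
def gmap (q h : ℕ) {R : Type*} [CommRing R] (π : R) (T : R) : R :=
  π * T + (-1) ^ (h - 1) * T ^ q

/-- For a polynomial `a = Σ c_m t^m ∈ F_q[t]`, `[a]_f(X) := Σ c_m f^(m)(X)`. -/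
def actF (q h : ℕ) {R : Type*} [CommRing R] (π : R) (u : ℕ → R)
    (K : Type*) [Field K] [Algebra K R] (a : Polynomial K) (X : R) : R :=
  ∑ m ∈ a.support, algebraMap K R (a.coeff m) * (fmap q h π u)^[m] X

/-- For `M = (a_{ij}) ∈ M_h(F_q[t])` and `Z ∈ R^h`, `(M⋆Z)ᵢ := Σ_j [a_{ij}]_f(Z_j)`. -/
def mStar (q h : ℕ) {R : Type*} [CommRing R] (π : R) (u : ℕ → R)
    (K : Type*) [Field K] [Algebra K R]
    (M : Matrix (Fin h) (Fin h) (Polynomial K)) (Z : Fin h → R) (i : Fin h) : R :=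
  ∑ j, actF q h π u K (M i j) (Z j)

/-!
Write `V = M⋆Y` and `Wⁱ` for `X` with `Xᵢ` replaced by `Vᵢ`. The map `f` is `F_q`-linear
and commutes with its iterates, so `f(Vᵢ) = (M⋆X)ᵢ`, while `f(Xⱼ) = 0`; hence `f(Wⁱ)` is
the `i`-th basis vector scaled by `(M⋆X)ᵢ`. Raising `μ(W)` to the `q`-th power shifts the
columns of the Moore matrix by one, and the new last column `W^{q^h} = f(W) − πW − Σ uₖ W^{q^k}`
reduces, modulo the other columns, to `f(W) − πW`; moving it to the front costs `(−1)^{h−1}`,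
which gives `g(μ(W)) = det(f(W) | W^q | ⋯ | W^{q^{h−1}})`. For `W = Wⁱ` only row `i` of the
first column is nonzero, so the rows of `Wⁱ` may be replaced by those of `X`, and summing over
`i` with `g` additive gives the theorem.
-/

namespace Matrix

variable {n R : Type*} [Fintype n] [DecidableEq n] [CommRing R]

theorem det_updateCol_single_congr {A B : Matrix n n R} {i : n} (hAB : ∀ r, r ≠ i → A r = B r)
    (j : n) (c : R) :
    (A.updateCol j (Pi.single i c)).det = (B.updateCol j (Pi.single i c)).det := by
  -- only the `(i, j)` cofactor survives, and it does not see row `i`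
  have hrow : A.updateRow i (Pi.single j 1) = B.updateRow i (Pi.single j 1) := by
    ext r k
    rcases eq_or_ne r i with rfl | hr
    · simp
    · simp [updateRow_ne hr, hAB r hr]
  simp only [← cramer_apply, cramer_eq_adjugate_mulVec, mulVec_single, Pi.smul_apply, col_apply,
    op_smul_eq_mul, adjugate_apply, hrow]

end Matrix

section Moore

variable {R : Type*} [CommRing R]

def mooreMatrix (q : ℕ) {h : ℕ} (W : Fin h → R) : Matrix (Fin h) (Fin h) R :=
  Matrix.of fun i j => W i ^ q ^ (j : ℕ)

theorem moore_eq_det_mooreMatrix (q : ℕ) {h : ℕ} (W : Fin h → R) :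
    moore q W = (mooreMatrix q W).det :=
  rfl

theorem of_ite_eq_updateCol_mooreMatrix (q n : ℕ) (F W : Fin (n + 1) → R) :
    Matrix.of (fun i j : Fin (n + 1) => if (j : ℕ) = 0 then F i else W i ^ q ^ (j : ℕ))
      = (mooreMatrix q W).updateCol 0 F := by
  ext i j
  rcases eq_or_ne j 0 with rfl | hj
  · simp
  · simp [mooreMatrix, hj]

theorem cramer_mooreMatrix_self (q n : ℕ) (W : Fin (n + 1) → R) :
    (mooreMatrix q W).cramer W 0 = moore q W := by
  rw [Matrix.cramer_apply, moore_eq_det_mooreMatrix]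
  congr 1
  ext i j
  rcases eq_or_ne j 0 with rfl | hj
  · simp [mooreMatrix]
  · simp [Matrix.updateCol_ne hj]

theorem det_updateCol_zero_mooreMatrix_pow {q n k : ℕ} (hk₀ : 1 ≤ k) (hk : k ≤ n)
    (W : Fin (n + 1) → R) :
    ((mooreMatrix q W).updateCol 0 (fun i => W i ^ q ^ k)).det = 0 := by
  have hne : (0 : Fin (n + 1)) ≠ ⟨k, by omega⟩ := Fin.ne_of_val_ne (by simp; omega)
  refine Matrix.det_zero_of_column_eq hne fun i => ?_
  simp [Matrix.updateCol_ne hne.symm, mooreMatrix]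

theorem det_mooreMatrix_shift (q n : ℕ) (W : Fin (n + 1) → R) :
    (Matrix.of fun i j : Fin (n + 1) => W i ^ q ^ ((j : ℕ) + 1)).det
      = (-1) ^ n * ((mooreMatrix q W).updateCol 0 (fun i => W i ^ q ^ (n + 1))).det := by
  have hrot : (Matrix.of fun i j : Fin (n + 1) => W i ^ q ^ ((j : ℕ) + 1))
      = ((mooreMatrix q W).updateCol 0 (fun i => W i ^ q ^ (n + 1))).submatrix id
          (finRotate (n + 1)) := by
    ext i j
    rcases eq_or_ne j (Fin.last n) with rfl | hj
    · simp
    · have hlt : j < Fin.last n := lt_of_le_of_ne (Fin.le_last j) hj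
      have hval := Fin.val_add_one_of_lt hlt
      have hsucc : j + 1 ≠ 0 := fun h0 => by rw [h0] at hval; simp at hval
      rw [Matrix.submatrix_apply, finRotate_apply, id, Matrix.updateCol_ne hsucc]
      simp [mooreMatrix, hval]
  rw [hrot, Matrix.det_permute', sign_finRotate]
  simp

end Moore

section Frobenius

variable {R : Type*} [CommRing R] {p e q : ℕ} [ExpChar R p] {K : Type*} [Field K] [Algebra K R]

theorem moore_pow (hq : q = p ^ e) {h : ℕ} (W : Fin h → R) :
    moore q W ^ q = (Matrix.of fun i j : Fin h => W i ^ q ^ ((j : ℕ) + 1)).det := by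
  subst hq
  rw [moore, ← iterateFrobenius_def, RingHom.map_det]
  congr 1
  ext i j
  simp only [RingHom.mapMatrix_apply, Matrix.map_apply, Matrix.of_apply, iterateFrobenius_def]
  rw [← pow_mul, ← pow_succ]

theorem gmap_sum (hq : q = p ^ e) (h : ℕ) (π : R) {ι : Type*} (s : Finset ι) (T : ι → R) :
    gmap q h π (∑ i ∈ s, T i) = ∑ i ∈ s, gmap q h π (T i) := by
  subst hq
  simp only [gmap, ← iterateFrobenius_def, map_sum, mul_sum, sum_add_distrib]

theorem fmap_add (hq : q = p ^ e) (h : ℕ) (π : R) (u : ℕ → R) (a b : R) :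
    fmap q h π u (a + b) = fmap q h π u a + fmap q h π u b := by
  subst hq
  simp only [fmap, ← pow_mul, add_pow_expChar_pow, mul_add, sum_add_distrib]
  ring

theorem fmap_sum (hq : q = p ^ e) (h : ℕ) (π : R) (u : ℕ → R) {ι : Type*} (s : Finset ι)
    (T : ι → R) :
    fmap q h π u (∑ i ∈ s, T i) = ∑ i ∈ s, fmap q h π u (T i) :=
  map_sum (AddMonoidHom.mk' (fmap q h π u) (fmap_add hq h π u)) T s

theorem fmap_algebraMap_mul (hK : ∀ c : K, c ^ q = c) (h : ℕ) (π : R) (u : ℕ → R) (c : K)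
    (x : R) :
    fmap q h π u (algebraMap K R c * x) = algebraMap K R c * fmap q h π u x := by
  have hpow : ∀ k, c ^ q ^ k = c := fun k => by
    induction k with
    | zero => simp
    | succ k ih => rw [pow_succ, pow_mul, ih, hK]
  simp only [fmap, mul_pow, ← map_pow, hpow, mul_add, mul_sum,
    mul_left_comm _ (algebraMap K R c)]

theorem fmap_actF (hq : q = p ^ e) (hK : ∀ c : K, c ^ q = c) (h : ℕ) (π : R) (u : ℕ → R)
    (a : Polynomial K) (x : R) :
    fmap q h π u (actF q h π u K a x) = actF q h π u K a (fmap q h π u x) := by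
  simp only [actF, fmap_sum hq, fmap_algebraMap_mul hK, ← Function.iterate_succ_apply',
    Function.iterate_succ_apply]

theorem fmap_mStar (hq : q = p ^ e) (hK : ∀ c : K, c ^ q = c) (h : ℕ) (π : R) (u : ℕ → R)
    (M : Matrix (Fin h) (Fin h) (Polynomial K)) (Z : Fin h → R) (i : Fin h) :
    fmap q h π u (mStar q h π u K M Z i)
      = mStar q h π u K M (fun j => fmap q h π u (Z j)) i := by
  simp only [mStar, fmap_sum hq, fmap_actF hq hK]

theorem gmap_moore (hq : q = p ^ e) (n : ℕ) (π : R) (u : ℕ → R) (W : Fin (n + 1) → R) :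
    gmap q (n + 1) π (moore q W)
      = ((mooreMatrix q W).updateCol 0 (fun i => fmap q (n + 1) π u (W i))).det := by
  have hlast : (fun i => W i ^ q ^ (n + 1)) = (fun i => fmap q (n + 1) π u (W i)) - π • W
      - ∑ k ∈ Ico 1 (n + 1), u k • fun i => W i ^ q ^ k := by
    funext i
    simp only [fmap, Pi.sub_apply, Pi.smul_apply, smul_eq_mul, Finset.sum_apply]
    ring
  have hvanish : ∀ k ∈ Ico 1 (n + 1), (mooreMatrix q W).cramer (fun i => W i ^ q ^ k) 0 = 0 :=
    fun k hk => by
      rw [Matrix.cramer_apply]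
      exact det_updateCol_zero_mooreMatrix_pow (mem_Ico.mp hk).1
        (Nat.lt_succ_iff.mp (mem_Ico.mp hk).2) W
  have hcol : ((mooreMatrix q W).updateCol 0 (fun i => W i ^ q ^ (n + 1))).det
      = ((mooreMatrix q W).updateCol 0 (fun i => fmap q (n + 1) π u (W i))).det
        - π * moore q W := by
    simp only [← Matrix.cramer_apply, hlast, map_sub, map_sum, map_smul, Pi.sub_apply,
      Pi.smul_apply, Finset.sum_apply, smul_eq_mul]
    rw [sum_eq_zero fun k hk => by rw [hvanish k hk, mul_zero], sub_zero,
      cramer_mooreMatrix_self]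
  have hsign : ((-1 : R) ^ n) * (-1) ^ n = 1 := by rw [← mul_pow]; simp
  rw [gmap, Nat.add_sub_cancel, moore_pow hq, det_mooreMatrix_shift, hcol]
  linear_combination
    (((mooreMatrix q W).updateCol 0 (fun i => fmap q (n + 1) π u (W i))).det - π * moore q W)
      * hsign

theorem gmap_sum_moore_update_eq_det (hq : q = p ^ e) (n : ℕ) (π : R) (u : ℕ → R)
    (X V F : Fin (n + 1) → R)
    (hX : ∀ j, fmap q (n + 1) π u (X j) = 0) (hV : ∀ i, fmap q (n + 1) π u (V i) = F i) :
    gmap q (n + 1) π (∑ i, moore q (Function.update X i (V i)))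
      = ((mooreMatrix q X).updateCol 0 F).det := by
  have hf : ∀ i, (fun r => fmap q (n + 1) π u (Function.update X i (V i) r))
      = Pi.single i (F i) := by
    intro i
    funext r
    rcases eq_or_ne r i with rfl | hr
    · simp [hV]
    · simp [hr, hX]
  have hrows : ∀ i r, r ≠ i →
      mooreMatrix q (Function.update X i (V i)) r = mooreMatrix q X r := by
    intro i r hr
    ext j
    simp [mooreMatrix, Function.update_of_ne hr]
  calc gmap q (n + 1) π (∑ i, moore q (Function.update X i (V i)))
      = ∑ i, ((mooreMatrix q X).updateCol 0 (Pi.single i (F i))).det := by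
        rw [gmap_sum hq]
        refine sum_congr rfl fun i _ => ?_
        rw [gmap_moore hq n π u, hf i, Matrix.det_updateCol_single_congr (hrows i)]
    _ = (mooreMatrix q X).cramer (∑ i, Pi.single i (F i)) 0 := by
        rw [map_sum, Finset.sum_apply]
        simp only [Matrix.cramer_apply]
    _ = ((mooreMatrix q X).updateCol 0 F).det := by
        rw [Finset.univ_sum_single, Matrix.cramer_apply]

end Frobenius

theorem gmap_sum_moore_mStar_eq_det_general
    (q h : ℕ) (hh : 1 ≤ h)
    (K : Type*) [Field K] [Fintype K] (hK : Fintype.card K = q)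
    (R : Type*) [CommRing R] [Algebra K R]
    (π : R) (u : ℕ → R) (Y : Fin h → R)
    (hY : ∀ i, (fmap q h π u)^[2] (Y i) = 0)
    (X : Fin h → R) (hXdef : ∀ i, X i = fmap q h π u (Y i))
    (M : Matrix (Fin h) (Fin h) (Polynomial K)) :
    gmap q h π (∑ i, moore q (Function.update X i (mStar q h π u K M Y i)))
      = Matrix.det (Matrix.of fun i j : Fin h =>
          if (j : ℕ) = 0 then mStar q h π u K M X i else X i ^ q ^ (j : ℕ)) := by
  -- only a nontrivial `R` inherits the characteristic of `K`
  rcases subsingleton_or_nontrivial R with hR | hR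
  · exact Subsingleton.elim _ _
  obtain ⟨e, hp, hcard⟩ := FiniteField.card K (ringChar K)
  have hq : q = ringChar K ^ (e : ℕ) := hK ▸ hcard
  have := charP_of_injective_algebraMap' K (A := R) (ringChar K)
  have : ExpChar R (ringChar K) := ExpChar.prime hp
  have hcoeff : ∀ c : K, c ^ q = c := fun c => hK ▸ FiniteField.pow_card c
  obtain ⟨n, rfl⟩ : ∃ n, h = n + 1 := ⟨h - 1, by omega⟩
  have hfX : ∀ j, fmap q (n + 1) π u (X j) = 0 := fun j => by rw [hXdef j]; exact hY j
  have hX : X = fun j => fmap q (n + 1) π u (Y j) := funext hXdef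
  rw [of_ite_eq_updateCol_mooreMatrix]
  exact gmap_sum_moore_update_eq_det hq n π u X _ _ hfX
    fun i => by rw [fmap_mStar hq hcoeff, ← hX]

/-- Suppose `f^(2)(Yᵢ) = 0` for all `i` and set `Xᵢ := f(Yᵢ)`.  Then for every matrix
`M ∈ M_h(F_q[t])`, `g(Σᵢ μ(X₁, …, X_{i−1}, (M⋆Y)ᵢ, X_{i+1}, …, X_h))` equals the
determinant of the `h×h` matrix whose `i`-th row is `((M⋆X)ᵢ, Xᵢ^q, …, Xᵢ^{q^{h−1}})`. -/
theorem gmap_sum_moore_mStar_eq_det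
    (p e q h : ℕ) (hp : p.Prime) (he : 1 ≤ e) (hq : q = p ^ e) (hh : 1 ≤ h)
    (K : Type*) [Field K] [Fintype K] [DecidableEq K] (hK : Fintype.card K = q)
    (R : Type*) [CommRing R] [Algebra K R]
    (π : R) (u : ℕ → R) (Y : Fin h → R)
    (hY : ∀ i, (fmap q h π u)^[2] (Y i) = 0)
    (X : Fin h → R) (hXdef : ∀ i, X i = fmap q h π u (Y i))
    (M : Matrix (Fin h) (Fin h) (Polynomial K)) :
    gmap q h π (∑ i, moore q (Function.update X i (mStar q h π u K M Y i)))
      = Matrix.det (Matrix.of fun i j : Fin h =>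
          if (j : ℕ) = 0 then mStar q h π u K M X i else X i ^ q ^ (j : ℕ)) :=
  gmap_sum_moore_mStar_eq_det_general q h hh K hK R π u Y hY X hXdef M
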